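/- Monotonicity of the interpretation in the type-variable valuation: if Θ|Γ ⊢ A : Type_i and δ, δ′ ∈ ⟦Θ⟧ satisfy δ ⊑ δ′ (pointwise set inclusion), then for every valuation ρ ∈ ⟦Γ⟧ one has ⟦A⟧(δ,ρ) ⊆ ⟦A⟧(δ′,ρ). -/
import Mathlib


set_option linter.unusedVariables false

namespace BG

/-! ## Raw syntax of the Basold–Geuvers type theory.

Types and terms are mixed into one syntactic category `Tm`, as in the paper's
raw syntax.  Contexts (`Ctx`), tuples of terms / context morphisms (`Tms`),
premises of fixed-point types (`Prems`, each premise being a local context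
`Γₖ`, a context morphism `σₖ` and a type `Aₖ`), and branches of
(co)recursors (`Branches`, each binding a variable `yₖ` with body `gₖ`)
are mutually defined. -/

mutual
inductive Tm : Type
  | one : Tm                                -- the unit type 1
  | star : Tm                               -- the unit element ⟨⟩
  | var : ℕ → Tm                            -- term variables
  | tyvar : ℕ → Tm                          -- type constructor variables
  | inst : Tm → Tm → Tm                     -- parameter instantiation M @ N
  | pabs : ℕ → Tm → Tm                      -- parameter abstraction (x). M
  | fp : Bool → ℕ → Ctx → Prems → Tm        -- ρ (X : (Γ) → Type; σ⃗; A⃗), true = μ, false = ν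
  | ctor : ℕ → Tm → Tm                      -- constructor in_k, annotated with its μ-type
  | dtor : ℕ → Tm → Tm                      -- destructor ξ_k, annotated with its ν-type
  | rec' : Tm → Branches → Tm               -- recursor rec (Γₖ, yₖ ↦ gₖ)
  | corec' : Tm → Branches → Tm             -- corecursor corec (Γₖ, yₖ ↦ gₖ)
inductive Ctx : Type
  | nil : Ctx
  | cons : ℕ → Tm → Ctx → Ctx
inductive Tms : Type
  | nil : Tms
  | cons : Tm → Tms → Tms
inductive Prems : Type
  | nil : Prems
  | cons : Ctx → Tms → Tm → Prems → Prems
inductive Branches : Type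
  | nil : Branches
  | cons : ℕ → Tm → Branches → Branches
end

/-! ### Basic operations -/

/-- Context extension `Γ, x : A` (at the right end). -/
def Ctx.ext : Ctx → ℕ → Tm → Ctx
  | .nil, x, A => .cons x A .nil
  | .cons y B Γ, x, A => .cons y B (Ctx.ext Γ x A)

/-- Concatenation of contexts. -/
def Ctx.append : Ctx → Ctx → Ctx
  | Γ, .nil => Γ
  | Γ, .cons x A Δ => Ctx.append (Γ.ext x A) Δ

/-- The list of variables declared in a context. -/
def Ctx.names : Ctx → List ℕ
  | .nil => []
  | .cons x _ Γ => x :: Ctx.names Γ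

def Tms.toList : Tms → List Tm
  | .nil => []
  | .cons t σ => t :: Tms.toList σ

def Tms.snoc : Tms → Tm → Tms
  | .nil, t => .cons t .nil
  | .cons s σ, t => .cons s (Tms.snoc σ t)

def Prems.get? : Prems → ℕ → Option (Ctx × Tms × Tm)
  | .nil, _ => none
  | .cons Γk σ A _, 0 => some (Γk, σ, A)
  | .cons _ _ _ ps, n + 1 => Prems.get? ps n

def Prems.len : Prems → ℕ
  | .nil => 0
  | .cons _ _ _ ps => Prems.len ps + 1

def Branches.get? : Branches → ℕ → Option (ℕ × Tm)
  | .nil, _ => none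
  | .cons y g _, 0 => some (y, g)
  | .cons _ _ bs, n + 1 => Branches.get? bs n

def Branches.len : Branches → ℕ
  | .nil => 0
  | .cons _ _ bs => Branches.len bs + 1

/-! ### Valuations and substitution -/

/-- A valuation assigns a pre-term to every term variable. -/
abbrev Val := ℕ → Tm

def idVal : Val := Tm.var

def update (ρ : Val) (x : ℕ) (M : Tm) : Val := fun y => if y = x then M else ρ y

/-- Shadow the variables of a context in a valuation (for going under binders). -/
def shadow (ρ : Val) : Ctx → Val
  | .nil => ρ
  | .cons x _ Γ => shadow (update ρ x (.var x)) Γ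

mutual
/-- Simultaneous substitution of a valuation into a pre-term. -/
def Tm.msubst : Tm → Val → Tm
  | .one, _ => .one
  | .star, _ => .star
  | .var x, ρ => ρ x
  | .tyvar X, _ => .tyvar X
  | .inst M N, ρ => .inst (Tm.msubst M ρ) (Tm.msubst N ρ)
  | .pabs x M, ρ => .pabs x (Tm.msubst M (update ρ x (.var x)))
  | .fp b X Γ ps, ρ => .fp b X (Ctx.msubst Γ ρ) (Prems.msubst ps ρ)
  | .ctor k T, ρ => .ctor k (Tm.msubst T ρ)
  | .dtor k T, ρ => .dtor k (Tm.msubst T ρ)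
  | .rec' T bs, ρ => .rec' (Tm.msubst T ρ) (Branches.msubst bs ρ)
  | .corec' T bs, ρ => .corec' (Tm.msubst T ρ) (Branches.msubst bs ρ)
def Ctx.msubst : Ctx → Val → Ctx
  | .nil, _ => .nil
  | .cons x A Γ, ρ => .cons x (Tm.msubst A ρ) (Ctx.msubst Γ (update ρ x (.var x)))
def Tms.msubst : Tms → Val → Tms
  | .nil, _ => .nil
  | .cons t σ, ρ => .cons (Tm.msubst t ρ) (Tms.msubst σ ρ)
def Prems.msubst : Prems → Val → Prems
  | .nil, _ => .nil
  | .cons Γk σ A ps, ρ =>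
      .cons (Ctx.msubst Γk ρ) (Tms.msubst σ (shadow ρ Γk)) (Tm.msubst A (shadow ρ Γk))
        (Prems.msubst ps ρ)
def Branches.msubst : Branches → Val → Branches
  | .nil, _ => .nil
  | .cons y g bs, ρ => .cons y (Tm.msubst g (update ρ y (.var y))) (Branches.msubst bs ρ)
end

/-- Capture-naive single substitution `t[s/x]`. -/
def subst (t : Tm) (x : ℕ) (s : Tm) : Tm := t.msubst (update idVal x s)

/-- The valuation determined by a context morphism `σ : _ → Γ`. -/
def valOf : Ctx → Tms → Val
  | .cons x _ Γ, .cons t σ => update (valOf Γ σ) x t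
  | _, _ => idVal

/-- Iterated parameter instantiation `t @ t₁ @ ⋯ @ tₙ`. -/
def Tm.instTms : Tm → Tms → Tm
  | t, .nil => t
  | t, .cons s σ => Tm.instTms (.inst t s) σ

/-- The identity context morphism. -/
def idTms : Ctx → Tms
  | .nil => .nil
  | .cons x _ Γ => .cons (.var x) (idTms Γ)

/-- Composition `τ ∘ σ` of context morphisms (componentwise substitution),
where `Γ` is the middle context. -/
def compTms (τ : Tms) (Γ : Ctx) (σ : Tms) : Tms := τ.msubst (valOf Γ σ)

/-- Substitution `Γ[t/x]` applied to every type of a context. -/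
def Ctx.sub1 (Γ : Ctx) (x : ℕ) (t : Tm) : Ctx := Γ.msubst (update idVal x t)

/-- Substitution `A[σ]` of a context morphism `σ : _ → Γ` into a type. -/
def csub (A : Tm) (Γ : Ctx) (σ : Tms) : Tm := A.msubst (valOf Γ σ)

mutual
/-- Substitution of a type constructor for a type constructor variable. -/
def Tm.tsub : Tm → ℕ → Tm → Tm
  | .one, _, _ => .one
  | .star, _, _ => .star
  | .var x, _, _ => .var x
  | .tyvar Y, X, S => if Y = X then S else .tyvar Y
  | .inst M N, X, S => .inst (Tm.tsub M X S) (Tm.tsub N X S)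
  | .pabs x M, X, S => .pabs x (Tm.tsub M X S)
  | .fp b Y Γ ps, X, S =>
      if Y = X then .fp b Y (Ctx.tsub Γ X S) ps
      else .fp b Y (Ctx.tsub Γ X S) (Prems.tsub ps X S)
  | .ctor k T, X, S => .ctor k (Tm.tsub T X S)
  | .dtor k T, X, S => .dtor k (Tm.tsub T X S)
  | .rec' T bs, X, S => .rec' (Tm.tsub T X S) (Branches.tsub bs X S)
  | .corec' T bs, X, S => .corec' (Tm.tsub T X S) (Branches.tsub bs X S)
def Ctx.tsub : Ctx → ℕ → Tm → Ctx
  | .nil, _, _ => .nil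
  | .cons x A Γ, X, S => .cons x (Tm.tsub A X S) (Ctx.tsub Γ X S)
def Tms.tsub : Tms → ℕ → Tm → Tms
  | .nil, _, _ => .nil
  | .cons t σ, X, S => .cons (Tm.tsub t X S) (Tms.tsub σ X S)
def Prems.tsub : Prems → ℕ → Tm → Prems
  | .nil, _, _ => .nil
  | .cons Γk σ A ps, X, S =>
      .cons (Ctx.tsub Γk X S) (Tms.tsub σ X S) (Tm.tsub A X S) (Prems.tsub ps X S)
def Branches.tsub : Branches → ℕ → Tm → Branches
  | .nil, _, _ => .nil
  | .cons y g bs, X, S => .cons y (Tm.tsub g X S) (Branches.tsub bs X S)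
end

/-- Full parameter abstraction `(Γ). A` of a type over a context. -/
def abstr : Ctx → Tm → Tm
  | .nil, A => A
  | .cons x _ Γ, A => .pabs x (abstr Γ A)

/-! ### The action of types on terms (Definition 5.2)

An entry records a type constructor variable `X : (Γ) → Type`, the source
and target types `A`, `B` and the term `t` (with one free variable) acting
as a morphism `A → B`. -/

structure TAEntry : Type where
  X : ℕ
  Γ : Ctx
  A : Tm
  B : Tm
  t : Tm

/-- Substitute, for each entry, the fully abstracted type `(Γᵢ). f(eᵢ)` for
the type variable `Xᵢ` in the premises of a fixed point type. -/
def Prems.tsubs (ps : Prems) (es : List TAEntry) (f : TAEntry → Tm) : Prems :=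
  es.foldl (fun ps e => Prems.tsub ps e.X (abstr e.Γ (f e))) ps

/-- The action `F_C(t⃗)` of a type constructor `C` on terms, as a relation:
`TyAct es C x F` states that `F` (a term with free variable `x`) is the
action of `C` on the tuple of terms recorded in `es`. -/
inductive TyAct : List TAEntry → Tm → ℕ → Tm → Prop
  | empty (C : Tm) (x : ℕ) : TyAct [] C x (.var x)
  | tvar {es : List TAEntry} (e : TAEntry) (he : e ∈ es) (x : ℕ) :
      TyAct es (.tyvar e.X) x e.t
  | weak {es C x r} (e : TAEntry) : TyAct es C x r → TyAct (es ++ [e]) C x r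
  | inst {es C x r} (s : Tm) (y : ℕ) :
      TyAct es C x r → TyAct es (.inst C s) x (subst r y s)
  | pabs {es C x r} (y : ℕ) : TyAct es C x r → TyAct es (.pabs y C) x r
  | mu {es : List TAEntry} {x : ℕ} (Y : ℕ) (Γ : Ctx) (ps : Prems) (bs : Branches)
      (rs : ℕ → Tm) (RA RB : Tm)
      (hRA : RA = .fp true Y Γ (ps.tsubs es (fun e => e.A)))
      (hRB : RB = .fp true Y Γ (ps.tsubs es (fun e => e.B)))
      (hlen : bs.len = ps.len)
      (hr : ∀ k Δk τk Dk yk gk, ps.get? k = some (Δk, τk, Dk) →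
              bs.get? k = some (yk, gk) →
              TyAct (es ++ [⟨Y, Γ, RA, RB, .var yk⟩]) Dk x (rs k))
      (hg : ∀ k Δk τk Dk yk gk, ps.get? k = some (Δk, τk, Dk) →
              bs.get? k = some (yk, gk) →
              gk = Tm.inst ((Tm.ctor k RB).instTms (idTms Δk)) (rs k)) :
      TyAct es (.fp true Y Γ ps) x
        (Tm.inst ((Tm.rec' RA bs).instTms (idTms Γ)) (.var x))
  | nu {es : List TAEntry} {x : ℕ} (Y : ℕ) (Γ : Ctx) (ps : Prems) (bs : Branches)
      (rs : ℕ → Tm) (RA RB : Tm)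
      (hRA : RA = .fp false Y Γ (ps.tsubs es (fun e => e.A)))
      (hRB : RB = .fp false Y Γ (ps.tsubs es (fun e => e.B)))
      (hlen : bs.len = ps.len)
      (hr : ∀ k Δk τk Dk gk, ps.get? k = some (Δk, τk, Dk) →
              bs.get? k = some (x, gk) →
              TyAct (es ++ [⟨Y, Γ, RA, RB, .var x⟩]) Dk x (rs k))
      (hg : ∀ k Δk τk Dk gk, ps.get? k = some (Δk, τk, Dk) →
              bs.get? k = some (x, gk) →
              gk = subst (rs k) x (Tm.inst ((Tm.dtor k RA).instTms (idTms Δk)) (.var x))) :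
      TyAct es (.fp false Y Γ ps) x
        (Tm.inst ((Tm.corec' RB bs).instTms (idTms Γ)) (.var x))

/-! ### Reduction (Figure 3) -/

/-- Contraction of terms: the recursor/constructor and destructor/corecursor rules. -/
inductive Contract : Tm → Tm → Prop
  | recCon {X : ℕ} {Γ Γk : Ctx} {ps : Prems} {bs : Branches} {k yk x : ℕ}
      {σk τ : Tms} {Ak gk F u EA EB μ : Tm}
      (hμ : μ = .fp true X Γ ps)
      (hp : ps.get? k = some (Γk, σk, Ak))
      (hb : bs.get? k = some (yk, gk))
      (hF : TyAct [⟨X, Γ, EA, EB, Tm.inst ((Tm.rec' μ bs).instTms (idTms Γ)) (.var x)⟩]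
              Ak x F) :
      Contract
        (Tm.inst ((Tm.rec' μ bs).instTms (compTms σk Γk τ))
          (Tm.inst ((Tm.ctor k μ).instTms τ) u))
        ((subst gk yk F).msubst (update (valOf Γk τ) x u))
  | corecCon {X : ℕ} {Γ Γk : Ctx} {ps : Prems} {bs : Branches} {k yk x : ℕ}
      {σk τ : Tms} {Ak gk F u EA EB ν : Tm}
      (hν : ν = .fp false X Γ ps)
      (hp : ps.get? k = some (Γk, σk, Ak))
      (hb : bs.get? k = some (yk, gk))
      (hF : TyAct [⟨X, Γ, EA, EB, Tm.inst ((Tm.corec' ν bs).instTms (idTms Γ)) (.var x)⟩]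
              Ak x F) :
      Contract
        (Tm.inst ((Tm.dtor k ν).instTms τ)
          (Tm.inst ((Tm.corec' ν bs).instTms (compTms σk Γk τ)) u))
        ((subst F x gk).msubst (update (valOf Γk τ) yk u))

mutual
/-- The reduction relation on terms: the compatible closure of contraction. -/
inductive Step : Tm → Tm → Prop
  | contract {M N : Tm} : Contract M N → Step M N
  | instL {M M' N : Tm} : Step M M' → Step (.inst M N) (.inst M' N)
  | instR {M N N' : Tm} : Step N N' → Step (.inst M N) (.inst M N')
  | pabs {x : ℕ} {M M' : Tm} : Step M M' → Step (.pabs x M) (.pabs x M')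
  | ctor {k : ℕ} {T T' : Tm} : Step T T' → Step (.ctor k T) (.ctor k T')
  | dtor {k : ℕ} {T T' : Tm} : Step T T' → Step (.dtor k T) (.dtor k T')
  | fpCtx {b : Bool} {X : ℕ} {Γ Γ' : Ctx} {ps : Prems} :
      StepCtx Γ Γ' → Step (.fp b X Γ ps) (.fp b X Γ' ps)
  | fpPrems {b : Bool} {X : ℕ} {Γ : Ctx} {ps ps' : Prems} :
      StepPrems ps ps' → Step (.fp b X Γ ps) (.fp b X Γ ps')
  | recT {T T' : Tm} {bs : Branches} : Step T T' → Step (.rec' T bs) (.rec' T' bs)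
  | recB {T : Tm} {bs bs' : Branches} : StepBranches bs bs' → Step (.rec' T bs) (.rec' T bs')
  | corecT {T T' : Tm} {bs : Branches} : Step T T' → Step (.corec' T bs) (.corec' T' bs)
  | corecB {T : Tm} {bs bs' : Branches} :
      StepBranches bs bs' → Step (.corec' T bs) (.corec' T bs')
inductive StepCtx : Ctx → Ctx → Prop
  | here {x : ℕ} {A A' : Tm} {Γ : Ctx} : Step A A' → StepCtx (.cons x A Γ) (.cons x A' Γ)
  | there {x : ℕ} {A : Tm} {Γ Γ' : Ctx} : StepCtx Γ Γ' → StepCtx (.cons x A Γ) (.cons x A Γ')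
inductive StepTms : Tms → Tms → Prop
  | here {t t' : Tm} {σ : Tms} : Step t t' → StepTms (.cons t σ) (.cons t' σ)
  | there {t : Tm} {σ σ' : Tms} : StepTms σ σ' → StepTms (.cons t σ) (.cons t σ')
inductive StepPrems : Prems → Prems → Prop
  | hereCtx {Γk Γk' : Ctx} {σ : Tms} {A : Tm} {ps : Prems} :
      StepCtx Γk Γk' → StepPrems (.cons Γk σ A ps) (.cons Γk' σ A ps)
  | hereTms {Γk : Ctx} {σ σ' : Tms} {A : Tm} {ps : Prems} :
      StepTms σ σ' → StepPrems (.cons Γk σ A ps) (.cons Γk σ' A ps)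
  | hereTy {Γk : Ctx} {σ : Tms} {A A' : Tm} {ps : Prems} :
      Step A A' → StepPrems (.cons Γk σ A ps) (.cons Γk σ A' ps)
  | there {Γk : Ctx} {σ : Tms} {A : Tm} {ps ps' : Prems} :
      StepPrems ps ps' → StepPrems (.cons Γk σ A ps) (.cons Γk σ A ps')
inductive StepBranches : Branches → Branches → Prop
  | here {y : ℕ} {g g' : Tm} {bs : Branches} :
      Step g g' → StepBranches (.cons y g bs) (.cons y g' bs)
  | there {y : ℕ} {g : Tm} {bs bs' : Branches} :
      StepBranches bs bs' → StepBranches (.cons y g bs) (.cons y g bs')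
end

/-- Strong normalisation: there is no infinite reduction sequence starting from `t`. -/
def SN (t : Tm) : Prop :=
  ¬ ∃ f : ℕ → Tm, f 0 = t ∧ ∀ n, Step (f n) (f (n + 1))

def SNTms (σ : Tms) : Prop := ∀ t ∈ σ.toList, SN t

/-- Reduction on types: parameter β-reduction together with the lifting of
term reduction to parameter positions, compatibly closed. -/
inductive TyStep : Tm → Tm → Prop
  | beta {x : ℕ} {A t : Tm} : TyStep (Tm.inst (.pabs x A) t) (subst A x t)
  | instArg {A t t' : Tm} : Step t t' → TyStep (.inst A t) (.inst A t')
  | instFun {A A' t : Tm} : TyStep A A' → TyStep (.inst A t) (.inst A' t)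
  | pabs {x : ℕ} {A A' : Tm} : TyStep A A' → TyStep (.pabs x A) (.pabs x A')

/-- One-step conversion of types. -/
def TyConv (A B : Tm) : Prop := TyStep A B ∨ TyStep B A

/-! ### The typing judgements (Definitions 3.1–3.5 and Figure 2) -/

/-- Type constructor variable contexts `Θ`, assigning parameter contexts. -/
abbrev TyCtx := List (ℕ × Ctx)

mutual
/-- Well-formed term variable contexts `⊢ Γ Ctx`. -/
inductive CtxWf : Ctx → Prop
  | nil : CtxWf .nil
  | ext {Γ : Ctx} {x : ℕ} {A : Tm} {i : ℕ} :
      CtxWf Γ → TyWf [] Γ A .nil i → CtxWf (Γ.ext x A)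
/-- Well-formed type constructor variable contexts `⊢ Θ TyCtx`. -/
inductive TyCtxWf : TyCtx → Prop
  | nil : TyCtxWf []
  | ext {Θ : TyCtx} {X : ℕ} {Γ : Ctx} :
      TyCtxWf Θ → CtxWf Γ → TyCtxWf (Θ ++ [(X, Γ)])
/-- Well-formed type constructors `Θ | Γ₁ ⊢ A : (Γ₂) → Type_i`. -/
inductive TyWf : TyCtx → Ctx → Tm → Ctx → ℕ → Prop
  | one (i : ℕ) : TyWf [] .nil .one .nil i
  | tyvar {Θ : TyCtx} {X : ℕ} {Γ : Ctx} (i : ℕ) :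
      TyCtxWf Θ → CtxWf Γ → TyWf (Θ ++ [(X, Γ)]) .nil (.tyvar X) Γ i
  | tyvarWeak {Θ : TyCtx} {Γ₁ : Ctx} {A : Tm} {Γ₂ : Ctx} {i : ℕ} {X : ℕ} {Γ : Ctx} :
      TyWf Θ Γ₁ A Γ₂ i → CtxWf Γ → TyWf (Θ ++ [(X, Γ)]) Γ₁ A Γ₂ i
  | weak {Θ : TyCtx} {Γ₁ : Ctx} {A B : Tm} {Γ₂ : Ctx} {i : ℕ} {x : ℕ} :
      TyWf Θ Γ₁ A Γ₂ i → TyWf [] Γ₁ B .nil i → TyWf Θ (Γ₁.ext x B) A Γ₂ i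
  | inst {Θ : TyCtx} {Γ₁ : Ctx} {A B t : Tm} {x : ℕ} {Γ₂ : Ctx} {i : ℕ} :
      TyWf Θ Γ₁ A (.cons x B Γ₂) i → HasType Γ₁ t .nil B →
      TyWf Θ Γ₁ (.inst A t) (Γ₂.sub1 x t) i
  | pabs {Θ : TyCtx} {Γ₁ : Ctx} {A B : Tm} {x : ℕ} {Γ₂ : Ctx} {i : ℕ} :
      TyWf Θ (Γ₁.ext x A) B Γ₂ i → TyWf Θ Γ₁ (.pabs x B) (.cons x A Γ₂) i
  | fp {Θ : TyCtx} {b : Bool} {X : ℕ} {Γ : Ctx} {ps : Prems} {i : ℕ} :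
      TyCtxWf Θ → CtxWf Γ →
      (∀ k Γk σk Ak, ps.get? k = some (Γk, σk, Ak) → CtxMor σk Γk Γ) →
      (∀ k Γk σk Ak, ps.get? k = some (Γk, σk, Ak) → TyWf (Θ ++ [(X, Γ)]) Γk Ak .nil i) →
      TyWf Θ .nil (.fp b X Γ ps) Γ i
/-- Well-formed terms `Γ₁ ⊢ t : (Γ₂) → A` (Figure 2). -/
inductive HasType : Ctx → Tm → Ctx → Tm → Prop
  | star : HasType .nil .star .nil .one
  | inst {Γ₁ : Ctx} {t s A B : Tm} {x : ℕ} {Γ₂ : Ctx} :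
      HasType Γ₁ t (.cons x A Γ₂) B → HasType Γ₁ s .nil A →
      HasType Γ₁ (.inst t s) (Γ₂.sub1 x s) (subst B x s)
  | conv {Γ : Ctx} {t A B : Tm} :
      HasType Γ t .nil A → TyConv A B → HasType Γ t .nil B
  | proj {Γ : Ctx} {A : Tm} {x i : ℕ} :
      TyWf [] Γ A .nil i → HasType (Γ.ext x A) (.var x) .nil A
  | weak {Γ₁ : Ctx} {t A B : Tm} {Γ₂ : Ctx} {x i : ℕ} :
      HasType Γ₁ t Γ₂ A → TyWf [] Γ₁ B .nil i → HasType (Γ₁.ext x B) t Γ₂ A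
  | ctor {X : ℕ} {Γ Γk : Ctx} {ps : Prems} {σk : Tms} {Ak : Tm} {k y i : ℕ} :
      TyWf [] .nil (.fp true X Γ ps) Γ i →
      ps.get? k = some (Γk, σk, Ak) →
      HasType .nil (.ctor k (.fp true X Γ ps))
        (Γk.ext y (Ak.tsub X (.fp true X Γ ps)))
        ((Tm.fp true X Γ ps).instTms σk)
  | dtor {X : ℕ} {Γ Γk : Ctx} {ps : Prems} {σk : Tms} {Ak : Tm} {k y i : ℕ} :
      TyWf [] .nil (.fp false X Γ ps) Γ i →
      ps.get? k = some (Γk, σk, Ak) →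
      HasType .nil (.dtor k (.fp false X Γ ps))
        (Γk.ext y ((Tm.fp false X Γ ps).instTms σk))
        (Ak.tsub X (.fp false X Γ ps))
  | rec' {Δ Γ : Ctx} {X : ℕ} {ps : Prems} {bs : Branches} {C : Tm} {i y : ℕ} :
      TyWf [] .nil (.fp true X Γ ps) Γ i →
      TyWf [] .nil C Γ i →
      bs.len = ps.len →
      (∀ k Γk σk Ak yk gk, ps.get? k = some (Γk, σk, Ak) → bs.get? k = some (yk, gk) →
         HasType ((Δ.append Γk).ext yk (Ak.tsub X C)) gk .nil (C.instTms σk)) →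
      HasType Δ (.rec' (.fp true X Γ ps) bs)
        (Γ.ext y ((Tm.fp true X Γ ps).instTms (idTms Γ)))
        (C.instTms (idTms Γ))
  | corec' {Δ Γ : Ctx} {X : ℕ} {ps : Prems} {bs : Branches} {C : Tm} {i y : ℕ} :
      TyWf [] .nil (.fp false X Γ ps) Γ i →
      TyWf [] .nil C Γ i →
      bs.len = ps.len →
      (∀ k Γk σk Ak yk gk, ps.get? k = some (Γk, σk, Ak) → bs.get? k = some (yk, gk) →
         HasType ((Δ.append Γk).ext yk (C.instTms σk)) gk .nil (Ak.tsub X C)) →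
      HasType Δ (.corec' (.fp false X Γ ps) bs)
        (Γ.ext y (C.instTms (idTms Γ)))
        ((Tm.fp false X Γ ps).instTms (idTms Γ))
/-- Context morphisms `σ : Γ₁ → Γ₂` (Definition 3.3). -/
inductive CtxMor : Tms → Ctx → Ctx → Prop
  | nil {Γ : Ctx} : CtxMor .nil Γ .nil
  | cons {σ : Tms} {Γ₁ Γ₂ : Ctx} {t A : Tm} {x : ℕ} :
      CtxMor σ Γ₁ Γ₂ → HasType Γ₁ t .nil (A.msubst (valOf Γ₂ σ)) →
      CtxMor (σ.snoc t) Γ₁ (Γ₂.ext x A)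
end

/-! ### Saturated sets (Section 7.2) -/

/-- Interpretation of a context morphism on valuations: `⟦σ⟧(γ)(y) = σ(y)[γ]`. -/
def morVal (Γ : Ctx) (σ : Tms) (γ : Val) : Val :=
  fun y => (valOf Γ σ y).msubst γ

/-- The tuple of terms a valuation assigns to the variables of a context. -/
def ctxTms : Ctx → Val → Tms
  | .nil, _ => .nil
  | .cons x _ Γ, γ => .cons (γ x) (ctxTms Γ γ)

/-- Base terms 𝔅. -/
inductive Base : Tm → Prop
  | var (x : ℕ) : Base (.var x)
  | rec' {T : Tm} {bs : Branches} {σ : Tms} {M : Tm} :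
      Base M → (∀ k y g, bs.get? k = some (y, g) → SN g) → SNTms σ →
      Base (Tm.inst ((Tm.rec' T bs).instTms σ) M)
  | dtor {X : ℕ} {Γ Γk : Ctx} {ps : Prems} {σk σ : Tms} {Ak M : Tm} {k : ℕ} {γ : Val} :
      Base M → SNTms σ → ps.get? k = some (Γk, σk, Ak) →
      σ = σk.msubst γ →
      Base (Tm.inst ((Tm.dtor k (.fp false X Γ ps)).instTms σ) M)

/-- The key redex relation: `KeyRed M P` states that `P` is obtained from `M`
by contracting the key redex of `M`. -/
inductive KeyRed : Tm → Tm → Prop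
  | head {M P : Tm} : Contract M P → KeyRed M P
  | rec' {T : Tm} {bs : Branches} {σ : Tms} {N N' : Tm} :
      KeyRed N N' →
      KeyRed (Tm.inst ((Tm.rec' T bs).instTms σ) N) (Tm.inst ((Tm.rec' T bs).instTms σ) N')
  | dtor {k : ℕ} {T : Tm} {σ : Tms} {N N' : Tm} :
      KeyRed N N' →
      KeyRed (Tm.inst ((Tm.dtor k T).instTms σ) N) (Tm.inst ((Tm.dtor k T).instTms σ) N')

/-- Saturated sets of pre-terms. -/
def Saturated (X : Set Tm) : Prop :=
  (∀ M ∈ X, SN M) ∧ (∀ M, Base M → M ∈ X) ∧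
    (∀ M P, SN M → KeyRed M P → P ∈ X → M ∈ X)

/-- Valuations of type constructor variables. -/
abbrev TyVal := ℕ → Val → Set Tm

def botTyVal : TyVal := fun _ _ => ∅

def updT (δ : TyVal) (X : ℕ) (U : Val → Set Tm) : TyVal :=
  fun Y => if Y = X then U else δ Y

/-- A family of term sets respects convertibility of valuations. -/
def ConvResp (U : Val → Set Tm) : Prop :=
  ∀ γ γ' : Val, (∀ y, γ y = γ' y ∨ Step (γ y) (γ' y)) → U γ = U γ'

def SatFam (U : Val → Set Tm) : Prop := ∀ γ, Saturated (U γ)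

/-- The parameter context (its variable names) of a type constructor. -/
def paramNames (Θ : TyCtx) : Tm → List ℕ
  | .pabs x A => x :: paramNames Θ A
  | .inst A _ => (paramNames Θ A).tail
  | .tyvar X => (((Θ.find? (fun p => p.1 == X)).map (fun p => p.2.names)).getD [])
  | .fp _ _ Γ _ => Γ.names
  | _ => []

/-- The interpretation of an inductive type (Figure 6). -/
def muSet (X : ℕ) (Γ : Ctx) (ps : Prems)
    (IA : ℕ → (Val → Set Tm) → Val → Set Tm) (IG : ℕ → Set Val) (ρ : Val) : Set Tm :=
  { M | ∀ U : Val → Set Tm, ConvResp U → SatFam U →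
        ∀ bs : Branches, bs.len = ps.len →
        (∀ k Γk σk Ak y N, ps.get? k = some (Γk, σk, Ak) → bs.get? k = some (y, N) →
           ∀ γ P, γ ∈ IG k → P ∈ IA k U γ →
             N.msubst (update γ y P) ∈ U (morVal Γk σk (update γ y P))) →
        Tm.inst ((Tm.rec' (.fp true X Γ ps) bs).instTms (ctxTms Γ ρ)) M ∈ U ρ }

/-- The interpretation of a coinductive type (Figure 6). -/
def nuSet (X : ℕ) (Γ : Ctx) (ps : Prems)
    (IA : ℕ → (Val → Set Tm) → Val → Set Tm) (ρ : Val) : Set Tm :=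
  { M | ∃ U : Val → Set Tm, ConvResp U ∧ SatFam U ∧
        ∀ k Γk σk Ak, ps.get? k = some (Γk, σk, Ak) →
        ∀ γ : Val, (∀ y ∈ Γ.names, morVal Γk σk γ y = ρ y) →
          Tm.inst ((Tm.dtor k (.fp false X Γ ps)).instTms (ctxTms Γk γ)) M ∈ IA k U γ }

mutual
/-- The interpretation of types as families of saturated sets (Figure 6),
given as a relation `Interp Θ δ ρ A S`, read `⟦A⟧(δ, ρ) = S`. -/
inductive Interp : TyCtx → TyVal → Val → Tm → Set Tm → Prop
  | one (Θ : TyCtx) (δ : TyVal) (ρ : Val) :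
      Interp Θ δ ρ .one {M | ∀ X : Set Tm, Saturated X → Tm.star ∈ X → M ∈ X}
  | tyvar (Θ : TyCtx) (δ : TyVal) (ρ : Val) (X : ℕ) :
      Interp Θ δ ρ (.tyvar X) (δ X ρ)
  | inst {Θ : TyCtx} {δ : TyVal} {ρ : Val} {A S} (t : Tm) (x : ℕ) (xs : List ℕ)
      (hx : paramNames Θ A = x :: xs)
      (h : Interp Θ δ (update ρ x (t.msubst ρ)) A S) :
      Interp Θ δ ρ (.inst A t) S
  | pabs {Θ : TyCtx} {δ : TyVal} {ρ : Val} {A S} (x : ℕ)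
      (h : Interp Θ δ ρ A S) : Interp Θ δ ρ (.pabs x A) S
  | mu (Θ : TyCtx) (δ : TyVal) (ρ : Val) (X : ℕ) (Γ : Ctx) (ps : Prems)
      (IA : ℕ → (Val → Set Tm) → Val → Set Tm) (IG : ℕ → Set Val)
      (hIA : ∀ k Γk σk Ak, ps.get? k = some (Γk, σk, Ak) →
               ∀ U, ConvResp U → SatFam U →
               ∀ γ, Interp (Θ ++ [(X, Γ)]) (updT δ X U) γ Ak (IA k U γ))
      (hIG : ∀ k Γk σk Ak, ps.get? k = some (Γk, σk, Ak) → InterpCtx Γk (IG k)) :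
      Interp Θ δ ρ (.fp true X Γ ps) (muSet X Γ ps IA IG ρ)
  | nu (Θ : TyCtx) (δ : TyVal) (ρ : Val) (X : ℕ) (Γ : Ctx) (ps : Prems)
      (IA : ℕ → (Val → Set Tm) → Val → Set Tm)
      (hIA : ∀ k Γk σk Ak, ps.get? k = some (Γk, σk, Ak) →
               ∀ U, ConvResp U → SatFam U →
               ∀ γ, Interp (Θ ++ [(X, Γ)]) (updT δ X U) γ Ak (IA k U γ)) :
      Interp Θ δ ρ (.fp false X Γ ps) (nuSet X Γ ps IA ρ)
/-- The interpretation of contexts as sets of valuations: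
`⟦Γ, x : A⟧ = {ρ[x ↦ M] | ρ ∈ ⟦Γ⟧, M ∈ ⟦A⟧(ρ)}`. -/
inductive InterpCtx : Ctx → Set Val → Prop
  | nil : InterpCtx .nil Set.univ
  | ext {Γ : Ctx} {E : Set Val} {x : ℕ} {A : Tm} (IA : Val → Set Tm)
      (hΓ : InterpCtx Γ E) (hA : ∀ γ, Interp [] botTyVal γ A (IA γ)) :
      InterpCtx (Ctx.ext Γ x A) {γ' | ∃ γ ∈ E, ∃ M ∈ IA γ, γ' = update γ x M}
end

/-- `ρ ∈ ⟦Γ⟧`. -/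
def InCtxI (Γ : Ctx) (ρ : Val) : Prop := ∃ E, InterpCtx Γ E ∧ ρ ∈ E

/-- `δ ∈ ⟦Θ⟧`: a family of convertibility-respecting saturated-set valued functions. -/
def InTyCtxI (Θ : TyCtx) (δ : TyVal) : Prop :=
  ∀ p ∈ Θ, ConvResp (δ p.1) ∧ SatFam (δ p.1)

/-- One-step reduction of valuations: one of the assigned terms reduces. -/
def ValStep (ρ ρ' : Val) : Prop :=
  ∃ y, Step (ρ y) (ρ' y) ∧ ∀ z, z ≠ y → ρ z = ρ' z

mutual
/-- Free term variables of a pre-term. -/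
def Tm.fv : Tm → List ℕ
  | .one => []
  | .star => []
  | .var x => [x]
  | .tyvar _ => []
  | .inst M N => Tm.fv M ++ Tm.fv N
  | .pabs x M => (Tm.fv M).filter (fun y => y != x)
  | .fp _ _ Γ ps => Ctx.fv Γ ++ Prems.fv ps
  | .ctor _ T => Tm.fv T
  | .dtor _ T => Tm.fv T
  | .rec' T bs => Tm.fv T ++ Branches.fv bs
  | .corec' T bs => Tm.fv T ++ Branches.fv bs
def Ctx.fv : Ctx → List ℕ
  | .nil => []
  | .cons x A Γ => Tm.fv A ++ (Ctx.fv Γ).filter (fun y => y != x)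
def Tms.fv : Tms → List ℕ
  | .nil => []
  | .cons t σ => Tm.fv t ++ Tms.fv σ
def Prems.fv : Prems → List ℕ
  | .nil => []
  | .cons Γk σ A ps =>
      Ctx.fv Γk ++ ((Tms.fv σ ++ Tm.fv A).filter (fun y => !((Ctx.names Γk).contains y)))
        ++ Prems.fv ps
def Branches.fv : Branches → List ℕ
  | .nil => []
  | .cons y g bs => ((Tm.fv g).filter (fun z => z != y)) ++ Branches.fv bs
end

mutual
/-- `IsParam r C`: the term `r` occurs as a parameter in the type `C`. -/
inductive IsParam : Tm → Tm → Prop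
  | instHere {C r : Tm} : IsParam r (.inst C r)
  | instThere {C r s : Tm} : IsParam r C → IsParam r (.inst C s)
  | pabs {x : ℕ} {C r : Tm} : IsParam r C → IsParam r (.pabs x C)
  | fp {b : Bool} {X : ℕ} {Γ : Ctx} {ps : Prems} {r : Tm} :
      IsParamPrems r ps → IsParam r (.fp b X Γ ps)
inductive IsParamPrems : Tm → Prems → Prop
  | inMor {Γk : Ctx} {σ : Tms} {A r : Tm} {ps : Prems} :
      r ∈ σ.toList → IsParamPrems r (.cons Γk σ A ps)
  | inTy {Γk : Ctx} {σ : Tms} {A r : Tm} {ps : Prems} :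
      IsParam r A → IsParamPrems r (.cons Γk σ A ps)
  | there {Γk : Ctx} {σ : Tms} {A r : Tm} {ps : Prems} :
      IsParamPrems r ps → IsParamPrems r (.cons Γk σ A ps)
end

end BG

namespace BG

theorem ext_ne_nil : ∀ (Γ : Ctx) (x : ℕ) (A : Tm), Ctx.ext Γ x A ≠ Ctx.nil
  | .nil, x, A => by simp [Ctx.ext]
  | .cons y B Γ, x, A => by simp [Ctx.ext]

theorem ext_inj : ∀ {Γ Γ' : Ctx} {x x' : ℕ} {A A' : Tm},
    Ctx.ext Γ x A = Ctx.ext Γ' x' A' → Γ = Γ' ∧ x = x' ∧ A = A'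
  | .nil, .nil, x, x', A, A' => by
      intro h; simp [Ctx.ext] at h; exact ⟨rfl, h.1, h.2⟩
  | .nil, .cons y' B' Γ', x, x', A, A' => by
      intro h; simp [Ctx.ext] at h
      exact absurd h.2.2.symm (ext_ne_nil _ _ _)
  | .cons y B Γ, .nil, x, x', A, A' => by
      intro h; simp [Ctx.ext] at h
      exact absurd h.2.2 (ext_ne_nil _ _ _)
  | .cons y B Γ, .cons y' B' Γ', x, x', A, A' => by
      intro h; simp [Ctx.ext] at h
      obtain ⟨h1, h2, h3⟩ := h
      obtain ⟨g1, g2, g3⟩ := ext_inj h3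
      exact ⟨by rw [h1, h2, g1], g2, g3⟩

theorem interpCtx_nil_inv {E : Set Val} (h : InterpCtx Ctx.nil E) : E = Set.univ := by
  generalize hΔ : Ctx.nil = Δ at h
  cases h with
  | nil => rfl
  | ext IA hΓ hA => exact absurd hΔ.symm (ext_ne_nil _ _ _)

theorem interpCtx_ext_inv {Γ : Ctx} {x : ℕ} {A : Tm} {E' : Set Val}
    (h : InterpCtx (Ctx.ext Γ x A) E') :
    ∃ (E : Set Val) (IA : Val → Set Tm), InterpCtx Γ E ∧ (∀ γ, Interp [] botTyVal γ A (IA γ)) ∧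
      E' = {γ' | ∃ γ ∈ E, ∃ M ∈ IA γ, γ' = update γ x M} := by
  generalize hΔ : Ctx.ext Γ x A = Δ at h
  cases h with
  | nil => exact absurd hΔ (ext_ne_nil _ _ _)
  | ext IA hΓ hA =>
      obtain ⟨h1, h2, h3⟩ := ext_inj hΔ
      subst h1; subst h2; subst h3
      exact ⟨_, IA, hΓ, hA, rfl⟩

theorem updT_le {δ δ' : TyVal} (h : ∀ X γ, δ X γ ⊆ δ' X γ) (X : ℕ)
    (U : Val → Set Tm) : ∀ Y γ, updT δ X U Y γ ⊆ updT δ' X U Y γ := by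
  intro Y γ
  unfold updT
  split
  · exact fun _ hm => hm
  · exact h Y γ

theorem interp_mono_main :
    ∀ {Θ : TyCtx} {δ : TyVal} {ρ : Val} {A : Tm} {S : Set Tm}, Interp Θ δ ρ A S →
      ∀ δ' S', Interp Θ δ' ρ A S' →
        ((∀ X γ, δ X γ ⊆ δ' X γ) → S ⊆ S') ∧ ((∀ X γ, δ' X γ ⊆ δ X γ) → S' ⊆ S) := by
  intro Θ δ ρ A S h
  induction h using Interp.rec
    (motive_2 := fun Γ E _ => ∀ E', InterpCtx Γ E' → E = E') with
  | one Θ δ ρ =>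
      intro δ' S' h'
      cases h'
      exact ⟨fun _ => le_refl _, fun _ => le_refl _⟩
  | tyvar Θ δ ρ X =>
      intro δ' S' h'
      cases h'
      exact ⟨fun hle => hle X ρ, fun hle => hle X ρ⟩
  | inst t x xs hx h ih =>
      intro δ' S' h'
      cases h' with
      | inst t x' xs' hx' h'' =>
          rw [hx] at hx'
          injection hx' with e1 e2
          subst e1
          exact ih _ _ h''
  | pabs x h ih =>
      intro δ' S' h'
      cases h' with
      | pabs x h'' => exact ih _ _ h''
  | mu Θ δ ρ X Γ ps IA IG hIA hIG ihIA ihIG =>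
      intro δ' S' h'
      cases h' with
      | mu _ _ _ _ _ _ IA' IG' hIA' hIG' =>
          constructor
          · intro hle M hM U hU1 hU2 bs hlen H
            apply hM U hU1 hU2 bs hlen
            intro k Γk σk Ak y N hget hbs γ P hγ hP
            have hEq : IG k = IG' k :=
              ihIG k Γk σk Ak hget (IG' k) (hIG' k Γk σk Ak hget)
            have hsub : IA k U γ ⊆ IA' k U γ :=
              (ihIA k Γk σk Ak hget U hU1 hU2 γ _ _
                (hIA' k Γk σk Ak hget U hU1 hU2 γ)).1 (updT_le hle X U)
            exact H k Γk σk Ak y N hget hbs γ P (hEq ▸ hγ) (hsub hP)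
          · intro hle M hM U hU1 hU2 bs hlen H
            apply hM U hU1 hU2 bs hlen
            intro k Γk σk Ak y N hget hbs γ P hγ hP
            have hEq : IG k = IG' k :=
              ihIG k Γk σk Ak hget (IG' k) (hIG' k Γk σk Ak hget)
            have hsub : IA' k U γ ⊆ IA k U γ :=
              (ihIA k Γk σk Ak hget U hU1 hU2 γ _ _
                (hIA' k Γk σk Ak hget U hU1 hU2 γ)).2 (updT_le hle X U)
            exact H k Γk σk Ak y N hget hbs γ P (hEq ▸ hγ) (hsub hP)
  | nu Θ δ ρ X Γ ps IA hIA ihIA =>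
      intro δ' S' h'
      cases h' with
      | nu _ _ _ _ _ _ IA' hIA' =>
          constructor
          · rintro hle M ⟨U, hU1, hU2, hd⟩
            refine ⟨U, hU1, hU2, fun k Γk σk Ak hget γ hmor => ?_⟩
            have hsub : IA k U γ ⊆ IA' k U γ :=
              (ihIA k Γk σk Ak hget U hU1 hU2 γ _ _
                (hIA' k Γk σk Ak hget U hU1 hU2 γ)).1 (updT_le hle X U)
            exact hsub (hd k Γk σk Ak hget γ hmor)
          · rintro hle M ⟨U, hU1, hU2, hd⟩
            refine ⟨U, hU1, hU2, fun k Γk σk Ak hget γ hmor => ?_⟩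
            have hsub : IA' k U γ ⊆ IA k U γ :=
              (ihIA k Γk σk Ak hget U hU1 hU2 γ _ _
                (hIA' k Γk σk Ak hget U hU1 hU2 γ)).2 (updT_le hle X U)
            exact hsub (hd k Γk σk Ak hget γ hmor)
  | nil =>
      rename_i E' h'
      exact (interpCtx_nil_inv h').symm
  | ext IA hΓ hA ihΓ ihA =>
      rename_i E' h'
      obtain ⟨E₁, IA₁, hΓ₁, hA₁, hE'⟩ := interpCtx_ext_inv h'
      subst hE'
      have hEset : _ = E₁ := ihΓ E₁ hΓ₁
      have hIAeq : ∀ γ, IA γ = IA₁ γ := by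
        intro γ
        have h2 := ihA γ _ _ (hA₁ γ)
        exact le_antisymm (h2.1 (fun _ _ _ h => h)) (h2.2 (fun _ _ _ h => h))
      subst hEset
      ext γ'
      simp only [Set.mem_setOf_eq]
      constructor
      · rintro ⟨γ, hγ, M, hM, rfl⟩
        exact ⟨γ, hγ, M, hIAeq γ ▸ hM, rfl⟩
      · rintro ⟨γ, hγ, M, hM, rfl⟩
        exact ⟨γ, hγ, M, (hIAeq γ).symm ▸ hM, rfl⟩

/-- **Monotonicity of the interpretation** (Lemma C.6): if
`Θ | Γ ⊢ A : Type_i` and `δ, δ′ ∈ ⟦Θ⟧` with `δ ⊑ δ′` pointwise, then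
`⟦A⟧(δ, ρ) ⊆ ⟦A⟧(δ′, ρ)` for every `ρ ∈ ⟦Γ⟧`. -/
theorem interp_monotone {Θ : TyCtx} {Γ : Ctx} {A : Tm} {i : ℕ}
    (hA : TyWf Θ Γ A Ctx.nil i) {δ δ' : TyVal}
    (hδ : InTyCtxI Θ δ) (hδ' : InTyCtxI Θ δ')
    (hle : ∀ X γ, δ X γ ⊆ δ' X γ) :
    ∀ ρ : Val, InCtxI Γ ρ →
    ∀ S S' : Set Tm, Interp Θ δ ρ A S → Interp Θ δ' ρ A S' → S ⊆ S' := by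
  intro ρ hρ S S' h h'
  exact (interp_mono_main h δ' S' h').1 hle
end BG
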